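/- Let S be a free numerical semigroup generated by a telescopic sequence T = (t_0, …, t_k) with gcd(T) = 1, let c(T) = (c_1, …, c_k), and set c_0 = 1. Let m = min{0 ≤ i ≤ k : t_i is odd} and I = {0 ≤ i ≤ k : t_i is even}. Then O(G(S)) − E(G(S)) = −1/2 + (c_m t_m)/(2 t_0) · ∏_{i ∈ I} c_i; equivalently, 2 t_0 (O(G(S)) − E(G(S))) = −t_0 + c_m t_m ∏_{i ∈ I} c_i. -/

import Mathlib

/-- The monoid `⟨t_0, …, t_{n-1}⟩` of all nonnegative integer linear combinations of
the first `n` terms of the sequence `t`. -/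
def genBy (t : ℕ → ℕ) (n : ℕ) : Set ℕ :=
  {s | ∃ x : ℕ → ℕ, s = ∑ i ∈ Finset.range n, x i * t i}

/-- `d_i = gcd(t_0, …, t_i)`. -/
def seqD (t : ℕ → ℕ) (i : ℕ) : ℕ := Finset.gcd (Finset.range (i + 1)) t

/-- `c_j = d_{j-1} / d_j` (for `j ≥ 1`). -/
def seqC (t : ℕ → ℕ) (j : ℕ) : ℕ := seqD t (j - 1) / seqD t j

/-- The sequence `(t_0, …, t_k)` of positive integers is telescopic if
`c_j · t_j ∈ ⟨t_0, …, t_{j-1}⟩` for every `j = 1, …, k`. -/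
def IsTelescopic (t : ℕ → ℕ) (k : ℕ) : Prop :=
  (∀ i ≤ k, 0 < t i) ∧ ∀ j, 1 ≤ j → j ≤ k → seqC t j * t j ∈ genBy t j

/-- `O(T)`: the number of odd elements of `T`. -/
noncomputable def countOdd (T : Set ℕ) : ℕ := {x ∈ T | Odd x}.ncard

/-- `E(T)`: the number of even elements of `T`. -/
noncomputable def countEven (T : Set ℕ) : ℕ := {x ∈ T | Even x}.ncard

/-!
For `A ⊆ ℕ` with finite complement put `P_A(x) = (1 - x) ∑_{a ∈ A} x^a = 1 - (1 - x) ∑_{g ∉ A} x^g`.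
Then `P_A(-1) = 1 + 2 (O(ℕ \ A) - E(ℕ \ A))`, so the claim is `t_0 P_S(-1) = c_m t_m ∏_{i ∈ I} c_i`.

Write `[c]_y = 1 + y + ⋯ + y^(c-1)`. A telescopic `S = ⟨t_0, …, t_(n+1)⟩` is glued from
`S' = ⟨t_0/d, …, t_n/d⟩`, `d = d_n`, and `t_(n+1)`: its elements are uniquely `r t_(n+1) + d s`
with `r < d` and `s ∈ S'`. Together with the Apéry set of `⟨d, t_(n+1)⟩` with respect to `d`,
this gives `[d]_x P_S(x) = [d]_(x^t_(n+1)) P_S'(x^d)`, and by induction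
`P_S(x) ∏_i [c_i]_(x^d_i) = ∏_i [c_i]_(x^t_i)` in every commutative ring.

At `x = -1` the factor `[c]_((-1)^e)` vanishes only if `c` is even and `e` is odd. On both sides
this happens only for `i = m ≥ 1`: `d_i` is even for `i < m`, and `d_i`, `c_(i+1)` are odd for
`i ≥ m`. Cancelling `1 + x` in `ℤ[x]` and evaluating at `-1` gives the formula, the remaining
factors telescoping through `c_1 ⋯ c_m d_m = t_0`.
-/

open Finset

noncomputable def semigroupPoly {R : Type*} [CommRing R] (A : Set ℕ) (x : R) : R :=
  1 - (1 - x) * ∑ᶠ g ∈ Aᶜ, x ^ g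

section SemigroupPoly

variable {R : Type*} [CommRing R] {A : Set ℕ}

theorem one_sub_mul_sum_filter_range {N : ℕ} [DecidablePred (· ∈ A)] (hN : ∀ g ∉ A, g < N)
    (x : R) :
    (1 - x) * ∑ a ∈ (range N).filter (· ∈ A), x ^ a = semigroupPoly A x - x ^ N := by
  have hgaps : ∑ᶠ g ∈ Aᶜ, x ^ g = ∑ a ∈ (range N).filter (· ∉ A), x ^ a := by
    have hset : (↑((range N).filter (· ∉ A)) : Set ℕ) = Aᶜ := by
      ext g
      simpa using hN g
    rw [← finsum_mem_coe_finset, hset]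
  have hgeom := geom_sum_mul_neg x N
  rw [← sum_filter_add_sum_filter_not (range N) (· ∈ A), ← hgaps] at hgeom
  unfold semigroupPoly
  linear_combination hgeom

theorem geom_sum_mul_semigroupPoly (hA : Aᶜ.Finite) {n : ℕ} (hn : ∀ a ∈ A, a + n ∈ A) (x : R) :
    (∑ i ∈ range n, x ^ i) * semigroupPoly A x = ∑ᶠ w ∈ A \ (· + n) '' A, x ^ w := by
  classical
  -- Below `N + 1 + n`, the elements of `A` are the shifts by `n` of those below `N + 1`,
  -- together with the Apéry set.
  obtain ⟨N, hN⟩ := hA.bddAbove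
  have hgap : ∀ g ∉ A, g < N + 1 := fun g hg => Nat.lt_succ_of_le (hN hg)
  set F := (range (N + 1)).filter (· ∈ A)
  set U := (range (N + 1 + n)).filter (· ∈ A)
  have hU : ∑ a ∈ U, x ^ a = ∑ a ∈ F, x ^ a + x ^ (N + 1) * ∑ i ∈ range n, x ^ i := by
    simp only [U, F, sum_filter, sum_range_add, mul_sum, ← pow_add]
    congr 1
    refine sum_congr rfl fun i _ => if_pos ?_
    by_contra h
    exact absurd (hgap _ h) (by omega)
  have hapery : A \ (· + n) '' A = ↑(U \ F.image (· + n)) := by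
    ext a
    simp only [U, F, Set.mem_sdiff, Set.mem_image, coe_sdiff, coe_filter, coe_image, mem_range]
    constructor
    · rintro ⟨ha, hna⟩
      refine ⟨⟨?_, ha⟩, fun ⟨b, ⟨_, hb⟩, hba⟩ => hna ⟨b, hb, hba⟩⟩
      by_contra h
      exact hna ⟨a - n, by_contra fun h' => absurd (hgap _ h') (by omega), by omega⟩
    · rintro ⟨⟨ha, hA⟩, hna⟩
      exact ⟨hA, fun ⟨b, hb, hba⟩ => hna ⟨b, ⟨by omega, hb⟩, hba⟩⟩
  have himage : F.image (· + n) ⊆ U := by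
    intro a
    simp only [U, F, mem_image, mem_filter, mem_range]
    rintro ⟨b, ⟨hb, hbA⟩, rfl⟩
    exact ⟨by omega, hn b hbA⟩
  have hshift : ∑ a ∈ F.image (· + n), x ^ a = x ^ n * ∑ a ∈ F, x ^ a := by
    rw [sum_image fun _ _ _ _ h => by simpa using h, mul_sum]
    simp only [pow_add, mul_comm]
  have htrunc := one_sub_mul_sum_filter_range hgap x
  have hgeom := geom_sum_mul_neg x n
  rw [← sum_sdiff himage, hshift] at hU
  rw [hapery, finsum_mem_coe_finset]
  linear_combination -(∑ i ∈ range n, x ^ i) * htrunc - hU + (∑ a ∈ F, x ^ a) * hgeom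

theorem RingHom.map_semigroupPoly {S : Type*} [CommRing S] (f : R →+* S) (hA : Aᶜ.Finite) (x : R) :
    f (semigroupPoly A x) = semigroupPoly A (f x) := by
  rw [semigroupPoly, semigroupPoly, map_sub, map_one, map_mul, map_sub, map_one]
  congr 2
  exact (AddMonoidHom.map_finsum_mem _ f.toAddMonoidHom hA).trans (by simp)

theorem semigroupPoly_neg_one (hA : Aᶜ.Finite) :
    semigroupPoly A (-1 : ℤ) = 1 + 2 * ((countOdd Aᶜ : ℤ) - countEven Aᶜ) := by
  classical
  have hcard (p : ℕ → Prop) [DecidablePred p] :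
      ({x ∈ Aᶜ | p x}.ncard : ℤ) = ∑ g ∈ hA.toFinset, if p g then 1 else 0 := by
    rw [sum_boole, ← Set.ncard_coe_finset]
    congr 2
    ext
    simp
  have hsign : ∑ᶠ g ∈ Aᶜ, (-1 : ℤ) ^ g =
      ∑ g ∈ hA.toFinset, ((if Even g then 1 else 0) - if Odd g then 1 else 0) := by
    rw [finsum_mem_eq_finite_toFinset_sum _ hA]
    refine sum_congr rfl fun g _ => ?_
    rcases Nat.even_or_odd g with h | h
    · simp [h, h.neg_one_pow, Nat.not_odd_iff_even.mpr h]
    · simp [h, h.neg_one_pow, Nat.not_even_iff_odd.mpr h]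
  rw [semigroupPoly, countOdd, countEven, hcard, hcard, hsign, sum_sub_distrib]
  ring

end SemigroupPoly

def glue (c T : ℕ) (A : Set ℕ) : Set ℕ :=
  (fun p : ℕ × ℕ => p.1 * T + c * p.2) '' (Set.Iio c ×ˢ A)

section Glue

variable {c T : ℕ}

theorem injOn_glue (hco : T.Coprime c) :
    (Set.Iio c ×ˢ Set.univ).InjOn fun p : ℕ × ℕ => p.1 * T + c * p.2 := by
  rintro ⟨r, s⟩ ⟨hr, -⟩ ⟨r', s'⟩ ⟨hr', -⟩ h
  simp only [Set.mem_Iio] at h hr hr'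
  have hmod : r * T ≡ r' * T [MOD c] := by
    simpa [Nat.ModEq, Nat.add_mul_mod_self_left] using congrArg (· % c) h
  obtain rfl : r = r' := (hmod.cancel_right_of_coprime hco.symm).eq_of_lt_of_lt hr hr'
  obtain rfl : s = s' := Nat.eq_of_mul_eq_mul_left (by omega) (Nat.add_left_cancel h)
  rfl

theorem glue_subset_glue_univ (A : Set ℕ) : glue c T A ⊆ glue c T Set.univ :=
  Set.image_mono (Set.prod_mono le_rfl (Set.subset_univ A))

theorem glue_univ_sdiff (hco : T.Coprime c) (A : Set ℕ) :
    glue c T Set.univ \ glue c T A = glue c T Aᶜ := by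
  have hprod : Set.Iio c ×ˢ Aᶜ = Set.Iio c ×ˢ Set.univ \ Set.Iio c ×ˢ A := by
    ext
    simp only [Set.mem_prod, Set.mem_compl_iff, Set.mem_univ, Set.mem_sdiff]
    tauto
  rw [glue, glue, glue, hprod,
    (injOn_glue hco).image_sdiff_subset (Set.prod_mono le_rfl (Set.subset_univ A))]

theorem compl_glue (hco : T.Coprime c) (A : Set ℕ) :
    (glue c T A)ᶜ = (glue c T Set.univ)ᶜ ∪ glue c T Aᶜ := by
  rw [← glue_univ_sdiff hco]
  ext a
  have := @glue_subset_glue_univ c T A a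
  simp only [Set.mem_compl_iff, Set.mem_union, Set.mem_sdiff]
  tauto

theorem image_add_glue (A : Set ℕ) : (· + c) '' glue c T A = glue c T ((· + 1) '' A) := by
  ext a
  simp only [glue, Set.mem_image, Set.mem_prod, Prod.exists, Set.mem_Iio]
  constructor
  · rintro ⟨_, ⟨r, s, ⟨hr, hs⟩, rfl⟩, rfl⟩
    exact ⟨r, s + 1, ⟨hr, s, hs, rfl⟩, by ring⟩
  · rintro ⟨r, _, ⟨hr, s, hs, rfl⟩, rfl⟩
    exact ⟨_, ⟨r, s, ⟨hr, hs⟩, rfl⟩, by ring⟩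

theorem mem_glue_univ_of_le (hco : T.Coprime c) (hc : 0 < c) {a : ℕ} (ha : c * T ≤ a) :
    a ∈ glue c T Set.univ := by
  have : NeZero c := ⟨hc.ne'⟩
  set r := ((a : ZMod c) * (T : ZMod c)⁻¹).val
  have hr : r < c := ZMod.val_lt _
  have hmod : r * T ≡ a [MOD c] := by
    rw [← ZMod.natCast_eq_natCast_iff]
    push_cast
    rw [ZMod.natCast_zmod_val, mul_assoc, mul_comm _ (T : ZMod c), ZMod.coe_mul_inv_eq_one T hco,
      mul_one]
  have hle : r * T ≤ a := (Nat.mul_le_mul_right T hr.le).trans ha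
  obtain ⟨s, hs⟩ := (Nat.modEq_iff_dvd' hle).mp hmod
  exact ⟨(r, s), ⟨hr, Set.mem_univ s⟩, show r * T + c * s = a by omega⟩

theorem finite_compl_glue_univ (hco : T.Coprime c) (hc : 0 < c) : (glue c T Set.univ)ᶜ.Finite :=
  (Set.finite_Iio (c * T)).subset fun _ ha =>
    Set.mem_Iio.mpr (not_le.mp fun h => ha (mem_glue_univ_of_le hco hc h))

theorem finite_glue {B : Set ℕ} (hB : B.Finite) : (glue c T B).Finite :=
  ((Set.finite_Iio c).prod hB).image _

theorem finite_compl_glue (hco : T.Coprime c) (hc : 0 < c) {A : Set ℕ} (hA : Aᶜ.Finite) :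
    (glue c T A)ᶜ.Finite := by
  rw [compl_glue hco]
  exact (finite_compl_glue_univ hco hc).union (finite_glue hA)

theorem glue_univ_sdiff_image_add (hco : T.Coprime c) :
    glue c T Set.univ \ (· + c) '' glue c T Set.univ = glue c T {0} := by
  have hsucc : (· + 1) '' (Set.univ : Set ℕ) = {0}ᶜ := by
    ext s
    simp only [Set.image_univ, Set.mem_range, Set.mem_compl_iff, Set.mem_singleton_iff]
    exact ⟨by rintro ⟨s, rfl⟩; omega, fun h => ⟨s - 1, by omega⟩⟩
  rw [image_add_glue, hsucc, glue_univ_sdiff hco, compl_compl]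

theorem finsum_mem_glue {R : Type*} [CommRing R] (hco : T.Coprime c) {B : Set ℕ} (hB : B.Finite)
    (x : R) :
    ∑ᶠ a ∈ glue c T B, x ^ a = (∑ r ∈ range c, (x ^ T) ^ r) * ∑ᶠ b ∈ B, (x ^ c) ^ b := by
  have hprod : Set.Iio c ×ˢ B = ↑(range c ×ˢ hB.toFinset) := by simp
  rw [glue, finsum_mem_image ((injOn_glue hco).mono (Set.prod_mono le_rfl (Set.subset_univ B))),
    hprod, finsum_mem_coe_finset, finsum_mem_eq_finite_toFinset_sum _ hB, sum_product,
    sum_mul_sum]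
  simp only [pow_add, pow_mul, mul_comm]

theorem geom_sum_mul_semigroupPoly_glue {R : Type*} [CommRing R] (hco : T.Coprime c) (hc : 0 < c)
    {A : Set ℕ} (hA : Aᶜ.Finite) (x : R) :
    (∑ i ∈ range c, x ^ i) * semigroupPoly (glue c T A) x =
      (∑ r ∈ range c, (x ^ T) ^ r) * semigroupPoly A (x ^ c) := by
  have hfin := finite_compl_glue_univ hco hc
  have hdisj : Disjoint (glue c T Set.univ)ᶜ (glue c T Aᶜ) :=
    Set.disjoint_compl_left_iff_subset.mpr (glue_subset_glue_univ _)
  have hgaps : ∑ᶠ a ∈ (glue c T A)ᶜ, x ^ a =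
      ∑ᶠ a ∈ (glue c T Set.univ)ᶜ, x ^ a +
        (∑ r ∈ range c, (x ^ T) ^ r) * ∑ᶠ g ∈ Aᶜ, (x ^ c) ^ g := by
    rw [compl_glue hco, finsum_mem_union hdisj hfin (finite_glue hA),
      finsum_mem_glue hco hA]
  have hapery := geom_sum_mul_semigroupPoly (n := c) hfin
    (by rintro _ ⟨⟨r, s⟩, ⟨hr, -⟩, rfl⟩; exact ⟨(r, s + 1), ⟨hr, trivial⟩, by ring⟩) x
  rw [glue_univ_sdiff_image_add hco, finsum_mem_glue hco (Set.finite_singleton 0),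
    finsum_mem_singleton] at hapery
  have hgeom := geom_sum_mul_neg x c
  unfold semigroupPoly at *
  rw [hgaps]
  linear_combination hapery - (∑ r ∈ range c, (x ^ T) ^ r) * (∑ᶠ g ∈ Aᶜ, (x ^ c) ^ g) * hgeom

end Glue

section GenBy

variable {t : ℕ → ℕ} {n : ℕ}

theorem add_mem_genBy {a b : ℕ} (ha : a ∈ genBy t n) (hb : b ∈ genBy t n) :
    a + b ∈ genBy t n := by
  obtain ⟨x, rfl⟩ := ha
  obtain ⟨y, rfl⟩ := hb
  exact ⟨x + y, by simp only [Pi.add_apply, add_mul, sum_add_distrib]⟩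

theorem mul_mem_genBy (k : ℕ) {a : ℕ} (ha : a ∈ genBy t n) : k * a ∈ genBy t n := by
  obtain ⟨x, rfl⟩ := ha
  exact ⟨k • x, by simp only [mul_sum, Pi.smul_apply, smul_eq_mul, mul_assoc]⟩

theorem mem_genBy_succ {a : ℕ} : a ∈ genBy t (n + 1) ↔ ∃ b ∈ genBy t n, ∃ y, a = b + y * t n := by
  constructor
  · rintro ⟨x, rfl⟩
    exact ⟨_, ⟨x, rfl⟩, x n, sum_range_succ _ _⟩
  · rintro ⟨_, ⟨x, rfl⟩, y, rfl⟩
    refine ⟨Function.update x n y, ?_⟩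
    rw [sum_range_succ, Function.update_self]
    congr 1
    exact sum_congr rfl fun i hi => by rw [Function.update_of_ne (by simp at hi; omega)]

theorem genBy_eq_image_mul {t' : ℕ → ℕ} {d : ℕ} (h : ∀ i < n, t i = d * t' i) :
    genBy t n = (d * ·) '' genBy t' n := by
  have hsum (x : ℕ → ℕ) : ∑ i ∈ range n, x i * t i = d * ∑ i ∈ range n, x i * t' i := by
    rw [mul_sum]
    exact sum_congr rfl fun i hi => by rw [h i (mem_range.mp hi)]; ring
  ext a
  constructor
  · rintro ⟨x, rfl⟩
    exact ⟨_, ⟨x, rfl⟩, (hsum x).symm⟩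
  · rintro ⟨_, ⟨x, rfl⟩, rfl⟩
    exact ⟨x, (hsum x).symm⟩

end GenBy

section SeqD

variable {t : ℕ → ℕ}

theorem seqD_dvd {i j : ℕ} (h : j ≤ i) : seqD t i ∣ t j :=
  gcd_dvd (mem_range.mpr (by omega))

theorem seqD_dvd_seqD {i j : ℕ} (h : j ≤ i) : seqD t i ∣ seqD t j :=
  dvd_gcd fun _ hb => seqD_dvd (by simp only [mem_range] at hb; omega)

theorem seqD_zero : seqD t 0 = t 0 := by
  simp [seqD]

theorem seqD_succ (n : ℕ) : seqD t (n + 1) = (t (n + 1)).gcd (seqD t n) := by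
  rw [seqD, range_add_one, gcd_insert]
  rfl

theorem seqC_mul_seqD (i : ℕ) : seqC t i * seqD t i = seqD t (i - 1) :=
  Nat.div_mul_cancel (seqD_dvd_seqD (by omega))

theorem seqD_pos (h : 0 < t 0) (i : ℕ) : 0 < seqD t i :=
  Nat.pos_of_dvd_of_pos (seqD_dvd (Nat.zero_le i)) h

theorem seqC_zero (h : 0 < t 0) : seqC t 0 = 1 :=
  Nat.div_self (seqD_pos h 0)

theorem seqD_mul_div_seqD {n i : ℕ} (hi : i ≤ n) : seqD t n * (t i / seqD t n) = t i :=
  Nat.mul_div_cancel' (seqD_dvd hi)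

theorem prod_seqC_mul_seqD (n : ℕ) : (∏ i ∈ range (n + 1), seqC t i) * seqD t n = t 0 := by
  induction n with
  | zero => simpa using (seqC_mul_seqD (t := t) 0).trans seqD_zero
  | succ n ih => rw [prod_range_succ, mul_assoc, seqC_mul_seqD, Nat.add_sub_cancel, ih]

theorem seqC_succ_of_seqD_eq_one {n : ℕ} (h : seqD t (n + 1) = 1) : seqC t (n + 1) = seqD t n := by
  rw [seqC, h, Nat.add_sub_cancel, Nat.div_one]

end SeqD

section Scale

variable {t t' : ℕ → ℕ} {d n : ℕ}

theorem seqD_eq_mul (h : ∀ i ≤ n, t i = d * t' i) {j : ℕ} (hj : j ≤ n) :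
    seqD t j = d * seqD t' j := by
  rw [seqD, gcd_congr rfl fun i hi => h i (by simp only [mem_range] at hi; omega),
    Finset.gcd_mul_left, normalize_eq]
  rfl

theorem seqC_eq_of_mul (hd : 0 < d) (h : ∀ i ≤ n, t i = d * t' i) {j : ℕ} (hj : j ≤ n) :
    seqC t' j = seqC t j := by
  rw [seqC, seqC, seqD_eq_mul h hj, seqD_eq_mul h (by omega : j - 1 ≤ n),
    Nat.mul_div_mul_left _ _ hd]

theorem IsTelescopic.mono {k : ℕ} (htel : IsTelescopic t n) (hk : k ≤ n) : IsTelescopic t k :=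
  ⟨fun i hi => htel.1 i (hi.trans hk), fun j hj1 hjk => htel.2 j hj1 (hjk.trans hk)⟩

theorem IsTelescopic.of_mul (hd : 0 < d) (h : ∀ i ≤ n, t i = d * t' i) (htel : IsTelescopic t n) :
    IsTelescopic t' n := by
  refine ⟨fun i hi => Nat.pos_of_mul_pos_left (h i hi ▸ htel.1 i hi), fun j hj1 hjn => ?_⟩
  have hgen : genBy t j = (d * ·) '' genBy t' j := genBy_eq_image_mul fun i hi => h i (by omega)
  obtain ⟨s, hs, hds⟩ := hgen ▸ htel.2 j hj1 hjn
  rw [seqC_eq_of_mul hd h hjn]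
  convert hs using 1
  apply Nat.eq_of_mul_eq_mul_left hd
  rw [show d * s = _ from hds, h j hjn]
  ring

end Scale

section Telescopic

variable {t : ℕ → ℕ} {n : ℕ}

theorem IsTelescopic.div_seqD (htel : IsTelescopic t n) :
    IsTelescopic (fun i => t i / seqD t n) n ∧ seqD (fun i => t i / seqD t n) n = 1 := by
  have hd := seqD_pos (htel.1 0 (Nat.zero_le _)) n
  have hdiv : ∀ i ≤ n, t i = seqD t n * (t i / seqD t n) := fun i hi => (seqD_mul_div_seqD hi).symm
  refine ⟨htel.of_mul hd hdiv, Nat.eq_of_mul_eq_mul_left hd ?_⟩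
  rw [← seqD_eq_mul hdiv le_rfl, mul_one]

theorem genBy_add_two_eq_glue (htel : IsTelescopic t (n + 1)) (hgcd : seqD t (n + 1) = 1) :
    genBy t (n + 1 + 1) =
      glue (seqD t n) (t (n + 1)) (genBy (fun i => t i / seqD t n) (n + 1)) := by
  set d := seqD t n
  set T := t (n + 1)
  set S' := genBy (fun i => t i / d) (n + 1)
  have hd : 0 < d := seqD_pos (htel.1 0 (Nat.zero_le _)) n
  have hscale : genBy t (n + 1) = (d * ·) '' S' :=
    genBy_eq_image_mul fun i hi => (seqD_mul_div_seqD (by omega)).symm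
  have hT : T ∈ S' := by
    have hcT := htel.2 (n + 1) (by omega) le_rfl
    rw [seqC_succ_of_seqD_eq_one hgcd, hscale] at hcT
    obtain ⟨s, hs, hds⟩ := hcT
    rwa [Nat.eq_of_mul_eq_mul_left hd hds] at hs
  ext a
  rw [mem_genBy_succ, hscale]
  constructor
  · rintro ⟨_, ⟨s, hs, rfl⟩, y, rfl⟩
    refine ⟨(y % d, s + y / d * T), ⟨Nat.mod_lt y hd, add_mem_genBy hs (mul_mem_genBy _ hT)⟩, ?_⟩
    linear_combination T * Nat.mod_add_div y d
  · rintro ⟨⟨r, s⟩, ⟨-, hs⟩, rfl⟩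
    exact ⟨d * s, ⟨s, hs, rfl⟩, r, add_comm _ _⟩

theorem IsTelescopic.finite_compl_genBy_and_semigroupPoly_mul_prod {R : Type*} [CommRing R]
    (htel : IsTelescopic t n) (hgcd : seqD t n = 1) :
    (genBy t (n + 1))ᶜ.Finite ∧ ∀ x : R,
      semigroupPoly (genBy t (n + 1)) x *
          ∏ i ∈ range (n + 1), ∑ j ∈ range (seqC t i), (x ^ seqD t i) ^ j =
        ∏ i ∈ range (n + 1), ∑ j ∈ range (seqC t i), (x ^ t i) ^ j := by
  induction n generalizing t with
  | zero =>
    have ht0 : t 0 = 1 := seqD_zero.symm.trans hgcd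
    have huniv : genBy t 1 = Set.univ :=
      Set.eq_univ_of_forall fun a => ⟨fun _ => a, by simp [ht0]⟩
    simp [huniv, semigroupPoly, seqC_zero (t := t) (by omega)]
  | succ n ih =>
    set d := seqD t n
    have hd : 0 < d := seqD_pos (htel.1 0 (Nat.zero_le _)) n
    have hdiv : ∀ i ≤ n, t i = d * (t i / d) := fun i hi => (seqD_mul_div_seqD hi).symm
    have hco : (t (n + 1)).Coprime d := (seqD_succ n).symm.trans hgcd
    obtain ⟨htel', hgcd'⟩ := (htel.mono n.le_succ).div_seqD
    obtain ⟨hfin', hP'⟩ := ih htel' hgcd'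
    rw [genBy_add_two_eq_glue htel hgcd]
    refine ⟨finite_compl_glue hco hd hfin', fun x => ?_⟩
    have hglue := geom_sum_mul_semigroupPoly_glue hco hd hfin' x
    have hIH := hP' (x ^ d)
    have hL :
        ∏ i ∈ range (n + 1), ∑ j ∈ range (seqC (t · / d) i), ((x ^ d) ^ seqD (t · / d) i) ^ j =
        ∏ i ∈ range (n + 1), ∑ j ∈ range (seqC t i), (x ^ seqD t i) ^ j :=
      prod_congr rfl fun i hi => by
        have hin : i ≤ n := Nat.lt_succ_iff.mp (mem_range.mp hi)
        rw [seqC_eq_of_mul hd hdiv hin, ← pow_mul, ← seqD_eq_mul hdiv hin]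
    have hR : ∏ i ∈ range (n + 1), ∑ j ∈ range (seqC (t · / d) i), ((x ^ d) ^ (t i / d)) ^ j =
        ∏ i ∈ range (n + 1), ∑ j ∈ range (seqC t i), (x ^ t i) ^ j :=
      prod_congr rfl fun i hi => by
        have hin : i ≤ n := Nat.lt_succ_iff.mp (mem_range.mp hi)
        rw [seqC_eq_of_mul hd hdiv hin, ← pow_mul, ← hdiv i hin]
    rw [hL, hR] at hIH
    rw [prod_range_succ _ (n + 1), prod_range_succ _ (n + 1), seqC_succ_of_seqD_eq_one hgcd, hgcd,
      pow_one]
    linear_combination (∏ i ∈ range (n + 1), ∑ j ∈ range (seqC t i), (x ^ seqD t i) ^ j) * hglue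
      + (∑ j ∈ range d, (x ^ t (n + 1)) ^ j) * hIH

end Telescopic

section EvalNegOne

open Polynomial

theorem geom_sum_two_mul {R : Type*} [CommSemiring R] (y : R) (n : ℕ) :
    ∑ j ∈ range (2 * n), y ^ j = (1 + y) * ∑ j ∈ range n, (y ^ 2) ^ j := by
  induction n with
  | zero => simp
  | succ n ih =>
    rw [show 2 * (n + 1) = 2 * n + 1 + 1 by ring, sum_range_succ, sum_range_succ, ih,
      sum_range_succ]
    ring

theorem exists_geom_sum_X_pow_eq_X_add_one_mul {c e : ℕ} (hc : Even c) (he : Odd e) :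
    ∃ Q : ℤ[X], ∑ j ∈ range c, (X ^ e) ^ j = (X + 1) * Q ∧ 2 * Q.eval (-1) = c * e := by
  obtain ⟨c, rfl⟩ := hc
  -- `[2c]_y = (1 + y) [c]_(y^2)` and `1 + X^e = (1 + X) (1 - X + ⋯ + X^(e-1))`.
  refine ⟨(∑ i ∈ range e, (-X) ^ i) * ∑ j ∈ range c, ((X ^ e) ^ 2) ^ j, ?_, ?_⟩
  · have hodd := geom_sum_mul (-X : ℤ[X]) e
    rw [he.neg_pow] at hodd
    rw [← two_mul, geom_sum_two_mul]
    linear_combination (∑ j ∈ range c, ((X ^ e) ^ 2) ^ j) * hodd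
  · simp only [eval_mul, eval_finsetSum, eval_pow, eval_neg, eval_X, neg_neg, one_pow,
      he.neg_one_pow, neg_one_sq, sum_const, card_range, nsmul_eq_mul, mul_one]
    push_cast
    ring

variable {t : ℕ → ℕ} {m : ℕ}

theorem even_seqD_of_lt (hmmin : ∀ i < m, Even (t i)) {i : ℕ} (hi : i < m) : Even (seqD t i) :=
  even_iff_two_dvd.mpr <|
    dvd_gcd fun j hj => (hmmin j (by simp only [mem_range] at hj; omega)).two_dvd

theorem odd_seqD_of_le (hmodd : Odd (t m)) {i : ℕ} (hi : m ≤ i) : Odd (seqD t i) :=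
  hmodd.of_dvd_nat (seqD_dvd hi)

theorem odd_seqC_of_lt (hmodd : Odd (t m)) {i : ℕ} (hi : m < i) : Odd (seqC t i) :=
  (odd_seqD_of_le hmodd (by omega : m ≤ i - 1)).of_dvd_nat (Dvd.intro _ (seqC_mul_seqD i))

theorem even_seqC (hmodd : Odd (t m)) (hmmin : ∀ i < m, Even (t i)) (hm : 0 < m) :
    Even (seqC t m) := by
  have h := even_seqD_of_lt hmmin (by omega : m - 1 < m)
  rw [← seqC_mul_seqD, Nat.even_mul] at h
  exact h.resolve_right (Nat.not_even_iff_odd.mpr (odd_seqD_of_le hmodd le_rfl))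

theorem eval_prod_erase_geom_sum_seqD (hmodd : Odd (t m)) (hmmin : ∀ i < m, Even (t i)) {k : ℕ}
    (hmk : m ≤ k) :
    (∏ i ∈ (range (k + 1)).erase m, ∑ j ∈ range (seqC t i), (X ^ seqD t i) ^ j : ℤ[X]).eval (-1) =
      ∏ i ∈ range m, (seqC t i : ℤ) := by
  have hfilter : ((range (k + 1)).erase m).filter (· < m) = range m := by
    ext
    simp only [mem_filter, mem_erase, mem_range]
    omega
  rw [eval_prod, ← hfilter, prod_filter]
  refine prod_congr rfl fun i hi => ?_
  simp only [eval_finsetSum, eval_pow, eval_X]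
  rcases lt_or_gt_of_ne (ne_of_mem_erase hi) with h | h
  · simp [h, (even_seqD_of_lt hmmin h).neg_one_pow]
  · rw [if_neg (by omega), (odd_seqD_of_le hmodd h.le).neg_one_pow, neg_one_geom_sum,
      if_neg (Nat.not_even_iff_odd.mpr (odd_seqC_of_lt hmodd h))]

theorem eval_prod_erase_geom_sum (hmodd : Odd (t m)) (hmmin : ∀ i < m, Even (t i)) (k : ℕ) :
    (∏ i ∈ (range (k + 1)).erase m, ∑ j ∈ range (seqC t i), (X ^ t i) ^ j : ℤ[X]).eval (-1) =
      ∏ i ∈ (range (k + 1)).filter (fun i => Even (t i)), (seqC t i : ℤ) := by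
  rw [eval_prod, prod_filter, ← prod_erase (range (k + 1)) (a := m)
    (f := fun i => if Even (t i) then (seqC t i : ℤ) else 1)
    (by simp [Nat.not_even_iff_odd.mpr hmodd])]
  refine prod_congr rfl fun i hi => ?_
  simp only [eval_finsetSum, eval_pow, eval_X]
  by_cases he : Even (t i)
  · simp [he, he.neg_one_pow]
  · have hmi : m < i := lt_of_le_of_ne (not_lt.mp fun h => he (hmmin i h)) (ne_of_mem_erase hi).symm
    rw [if_neg he, (Nat.not_even_iff_odd.mp he).neg_one_pow, neg_one_geom_sum,
      if_neg (Nat.not_even_iff_odd.mpr (odd_seqC_of_lt hmodd hmi))]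

theorem mul_semigroupPoly_neg_one_of_mul_prod {A : Set ℕ} (hA : Aᶜ.Finite) {k : ℕ} (hmk : m ≤ k)
    (hmodd : Odd (t m)) (hmmin : ∀ i < m, Even (t i))
    (hP : semigroupPoly A (X : ℤ[X]) *
        ∏ i ∈ range (k + 1), ∑ j ∈ range (seqC t i), (X ^ seqD t i) ^ j =
      ∏ i ∈ range (k + 1), ∑ j ∈ range (seqC t i), (X ^ t i) ^ j) :
    (t 0 : ℤ) * semigroupPoly A (-1) =
      seqC t m * t m * ∏ i ∈ (range (k + 1)).filter (fun i => Even (t i)), (seqC t i : ℤ) := by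
  have hm : m ∈ range (k + 1) := mem_range.mpr (by omega)
  rw [← mul_prod_erase _ _ hm, ← mul_prod_erase _ _ hm] at hP
  set L : ℤ[X] := ∏ i ∈ (range (k + 1)).erase m, ∑ j ∈ range (seqC t i), (X ^ seqD t i) ^ j
  set R : ℤ[X] := ∏ i ∈ (range (k + 1)).erase m, ∑ j ∈ range (seqC t i), (X ^ t i) ^ j
  have hPeval : (semigroupPoly A X).eval (-1) = semigroupPoly A (-1 : ℤ) := by
    simpa using (evalRingHom (-1 : ℤ)).map_semigroupPoly hA X
  have hLeval := eval_prod_erase_geom_sum_seqD hmodd hmmin hmk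
  have hReval := eval_prod_erase_geom_sum hmodd hmmin k
  have htele : (∏ i ∈ range m, (seqC t i : ℤ)) * seqC t m * seqD t m = t 0 := by
    rw [← prod_range_succ]
    exact_mod_cast prod_seqC_mul_seqD m
  rcases Nat.eq_zero_or_pos m with rfl | hm0
  · have hc0 : seqC t 0 = 1 := seqC_zero hmodd.pos
    simp only [hc0, range_one, sum_singleton, pow_zero, one_mul] at hP
    have heval := congrArg (eval (-1)) hP
    rw [eval_mul, hPeval, hLeval, hReval, range_zero, prod_empty, mul_one] at heval
    rw [heval, hc0]
    ring
  · obtain ⟨QL, hQL, hQL'⟩ := exists_geom_sum_X_pow_eq_X_add_one_mul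
      (even_seqC hmodd hmmin hm0) (odd_seqD_of_le hmodd le_rfl)
    obtain ⟨QR, hQR, hQR'⟩ := exists_geom_sum_X_pow_eq_X_add_one_mul
      (even_seqC hmodd hmmin hm0) hmodd
    rw [hQL, hQR] at hP
    have hX1 : (X + 1 : ℤ[X]) ≠ 0 := X_add_C_ne_zero 1
    have hcancel : semigroupPoly A X * QL * L = QR * R :=
      mul_left_cancel₀ hX1 (by linear_combination hP)
    have heval := congrArg (eval (-1)) hcancel
    rw [eval_mul, eval_mul, eval_mul, hPeval, hLeval, hReval] at heval
    linear_combination 2 * heval - semigroupPoly A (-1 : ℤ) * htele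
      - semigroupPoly A (-1 : ℤ) * (∏ i ∈ range m, (seqC t i : ℤ)) * hQL'
      + (∏ i ∈ (range (k + 1)).filter (fun i => Even (t i)), (seqC t i : ℤ)) * hQR'

end EvalNegOne

/-- Main theorem: for `S` free generated by telescopic `T = (t_0, …, t_k)` with
`gcd T = 1`, `c_0 = 1`, `m` the least index with `t_m` odd, and
`I = {0 ≤ i ≤ k : t_i even}`, we have
`O(G(S)) - E(G(S)) = -1/2 + (c_m t_m)/(2 t_0) · ∏_{i ∈ I} c_i`, i.e.
`2 t_0 (O(G(S)) - E(G(S))) = -t_0 + c_m t_m ∏_{i ∈ I} c_i`. -/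
theorem main_parity_free (t : ℕ → ℕ) (k : ℕ) (htel : IsTelescopic t k)
    (hgcd : seqD t k = 1)
    (m : ℕ) (hmk : m ≤ k) (hmodd : Odd (t m)) (hmmin : ∀ i < m, Even (t i)) :
    2 * (t 0 : ℤ) * ((countOdd (genBy t (k + 1))ᶜ : ℤ) - (countEven (genBy t (k + 1))ᶜ : ℤ))
      = -(t 0 : ℤ) + (if m = 0 then 1 else (seqC t m : ℤ)) * (t m : ℤ) *
          ∏ i ∈ (Finset.range (k + 1)).filter (fun i => Even (t i)),
            (if i = 0 then 1 else (seqC t i : ℤ)) := by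
  obtain ⟨hfin, hP⟩ :=
    htel.finite_compl_genBy_and_semigroupPoly_mul_prod (R := Polynomial ℤ) hgcd
  have hkey := mul_semigroupPoly_neg_one_of_mul_prod hfin hmk hmodd hmmin (hP Polynomial.X)
  rw [semigroupPoly_neg_one hfin] at hkey
  have hc (i : ℕ) : (if i = 0 then 1 else (seqC t i : ℤ)) = seqC t i := by
    split_ifs with h
    · rw [h, seqC_zero (htel.1 0 (Nat.zero_le k)), Nat.cast_one]
    · rfl
  simp only [hc]
  linear_combination hkey
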